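/- Abstract star-property transfer: let L and L' be sets of runs such that L' is obtained from L by deleting all ε-transitions (transitions with empty label set). If the language function defined by L has the *-property — membership of a complex event C depends only on the subsequence of the stream at positions in supp(C) — then for every stream S and position n, the standard semantics of L equals the *-semantics of L': a complex event C is accepted by L over S iff it is accepted by L' over S under *-runs that skip non-selected positions. -/
import Mathlib


variable {T Lbl : Type}

section CE

variable [Fintype Lbl] [DecidableEq Lbl]

/-- A complex event assigns to each label a finite set of stream positions. -/
abbrev CE (Lbl : Type) := Lbl → Finset ℕ

/-- The support of a complex event. -/
def suppCE (C : CE Lbl) : Finset ℕ := Finset.univ.biUnion C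

/-- The complex event induced by a list of emitted label sets: position `i`
carries label `A` iff `A` belongs to the `i`-th emitted set. -/
def ceOf (ls : List (Finset Lbl)) : CE Lbl :=
  fun A => (Finset.range ls.length).filter fun i => A ∈ ls.getD i ∅

/-- The increasing enumeration of the support of a complex event. -/
def posList (C : CE Lbl) : List ℕ := (suppCE C).sort (· ≤ ·)

/-- The compression of a complex event along its own support: position
`p = posList C !! i` is renamed to `i`. -/
def compress (C : CE Lbl) : CE Lbl :=
  fun A => (Finset.range (posList C).length).filter fun i => (posList C).getD i 0 ∈ C A

/-- The sub-stream of `S` consisting of the events at the positions of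
`supp C` (in increasing order), arbitrarily extended beyond them. -/
def subStream (S : ℕ → T) (C : CE Lbl) : ℕ → T :=
  fun i => S ((posList C).getD i i)

/-- A set of runs is abstracted by its acceptance relation `Acc ts ls`:
the automaton has an accepting run over the finite event sequence `ts`
emitting the label sets `ls` (position by position; an `ε`-transition emits
`∅`).  The standard semantics at position `n`: complex events produced by
accepting runs over the prefix `S[0..n]`. -/
def runSem (Acc : List T → List (Finset Lbl) → Prop) (S : ℕ → T) (n : ℕ) :
    Set (CE Lbl) :=
  {C | ∃ ls : List (Finset Lbl), ls.length = n + 1 ∧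
        Acc (List.ofFn fun i : Fin (n + 1) => S i) ls ∧ C = ceOf ls}

/-- The `*`-property: membership of a complex event `C` depends only on the
subsequence of the stream at the positions of `supp C`: `C` is accepted over
`S` (ending at `n`) iff its compression is accepted over the sub-stream
`S_C` (ending at position `|supp C| - 1`). -/
def StarProperty (Acc : List T → List (Finset Lbl) → Prop) : Prop :=
  ∀ (S : ℕ → T) (n : ℕ) (C : CE Lbl), (suppCE C).Nonempty →
    suppCE C ⊆ Finset.range (n + 1) →
    (C ∈ runSem Acc S n ↔
      compress C ∈ runSem Acc (subStream S C) ((suppCE C).card - 1))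

/-- The `*`-semantics of the `ε`-free part of `Acc` (all `ε`-transitions,
i.e. transitions emitting `∅`, deleted): a `*`-run reads exactly the
positions of `supp C` (all of them labeled), skipping all other stream
positions, and ends at position `n`. -/
def starSem (Acc : List T → List (Finset Lbl) → Prop) (S : ℕ → T) (n : ℕ) :
    Set (CE Lbl) :=
  {C | n ∈ suppCE C ∧ suppCE C ⊆ Finset.range (n + 1) ∧
    ∃ ls : List (Finset Lbl), ls.length = (suppCE C).card ∧ (∅ : Finset Lbl) ∉ ls ∧
      Acc (List.ofFn fun i : Fin (suppCE C).card => subStream S C i) ls ∧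
      compress C = ceOf ls}

end CE

section Aux

variable [Fintype Lbl] [DecidableEq Lbl]

lemma mem_suppCE {C : CE Lbl} {p : ℕ} : p ∈ suppCE C ↔ ∃ A, p ∈ C A := by
  simp [suppCE]

lemma supp_ceOf_subset (ls : List (Finset Lbl)) :
    suppCE (ceOf ls) ⊆ Finset.range ls.length := by
  intro p hp
  rw [mem_suppCE] at hp
  obtain ⟨A, hA⟩ := hp
  simp only [ceOf, Finset.mem_filter] at hA
  exact hA.1

lemma posList_length (C : CE Lbl) : (posList C).length = (suppCE C).card :=
  Finset.length_sort _

lemma supp_compress (C : CE Lbl) :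
    suppCE (compress C) = Finset.range (suppCE C).card := by
  ext i
  rw [mem_suppCE]
  simp only [compress, Finset.mem_filter, Finset.mem_range, posList_length]
  constructor
  · rintro ⟨A, h1, _⟩; exact h1
  · intro hi
    have hi' : i < (posList C).length := by rwa [posList_length]
    have hmem : (posList C).getD i 0 ∈ suppCE C := by
      rw [← Finset.mem_sort (α := ℕ) (· ≤ ·)]
      rw [List.getD_eq_getElem _ _ hi']
      exact List.getElem_mem _
    rw [mem_suppCE] at hmem
    obtain ⟨A, hA⟩ := hmem
    exact ⟨A, hi, hA⟩

lemma ofFn_congr {a b : ℕ} (h : a = b) (g : ℕ → T) :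
    (List.ofFn fun i : Fin a => g i) = List.ofFn fun i : Fin b => g i := by
  subst h; rfl

end Aux

/-- abstract star-property transfer: if the run language `Acc`
has the `*`-property, then for every stream `S` and position `n`, the standard
semantics of `Acc` (restricted to complex events selecting the last position)
coincides with the `*`-semantics of its `ε`-free part: a complex event is
accepted by `Acc` over `S` iff it is accepted by `*`-runs of the `ε`-free
part, which skip non-selected positions. -/
theorem star_property_transfer [Fintype Lbl] [DecidableEq Lbl]
    (Acc : List T → List (Finset Lbl) → Prop) (hstar : StarProperty Acc)
    (S : ℕ → T) (n : ℕ) :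
    {C : CE Lbl | C ∈ runSem Acc S n ∧ n ∈ suppCE C} = starSem Acc S n := by
  ext C
  simp only [Set.mem_setOf_eq, starSem]
  constructor
  · rintro ⟨hC, hn⟩
    have hne : (suppCE C).Nonempty := ⟨n, hn⟩
    have hk : (suppCE C).card - 1 + 1 = (suppCE C).card :=
      Nat.succ_pred_eq_of_pos (Finset.card_pos.mpr hne)
    have hsub : suppCE C ⊆ Finset.range (n + 1) := by
      obtain ⟨ls, hlen, _, hCls⟩ := hC
      rw [hCls]
      have := supp_ceOf_subset ls
      rwa [hlen] at this
    have h2 := (hstar S n C hne hsub).mp hC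
    obtain ⟨ls, hlen, hacc, hcomp⟩ := h2
    rw [hk] at hlen
    refine ⟨hn, hsub, ls, hlen, ?_, ?_, hcomp⟩
    · intro hmem
      obtain ⟨i, hi, hgi⟩ := List.mem_iff_getElem.mp hmem
      have hi' : i < (suppCE C).card := hlen ▸ hi
      have : i ∈ suppCE (compress C) := by
        rw [supp_compress]; exact Finset.mem_range.mpr hi'
      rw [mem_suppCE] at this
      obtain ⟨A, hA⟩ := this
      rw [hcomp] at hA
      simp only [ceOf, Finset.mem_filter] at hA
      rw [List.getD_eq_getElem _ _ hi, hgi] at hA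
      exact absurd hA.2 (Finset.notMem_empty A)
    · rw [← ofFn_congr hk (fun i => subStream S C i)]
      exact hacc
  · rintro ⟨hn, hsub, ls, hlen, _, hacc, hcomp⟩
    have hne : (suppCE C).Nonempty := ⟨n, hn⟩
    have hk : (suppCE C).card - 1 + 1 = (suppCE C).card :=
      Nat.succ_pred_eq_of_pos (Finset.card_pos.mpr hne)
    refine ⟨(hstar S n C hne hsub).mpr ?_, hn⟩
    refine ⟨ls, by rw [hlen, hk], ?_, hcomp⟩
    rw [ofFn_congr hk (fun i => subStream S C i)]
    exact hacc
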